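/- arXiv:1811.06871 — 4 statements merged into one kernel-verified Lean document; each statement's English description precedes it below -/
import Mathlib

section
/- Let x₁,…,xₙ be a sequence with values in a set of size ℓ that is non-crossing (for all i<j<k<l, we have xᵢ≠xₖ, or xⱼ≠xₗ, or all four of xᵢ,xⱼ,xₖ,xₗ are equal) and minimal (there is no index i with xᵢ = xᵢ₊₁ = xᵢ₊₂). Then n ≤ 4ℓ. -/
/-!
Classify each position `p` of the sequence: either its value is repeated immediately at the next
position, or its value never occurs again (at most one such position per value), or its value
occurs again only after a gap. Gap positions `p` are told apart by the value at `p + 1`: two gap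
positions with the same next value would produce a crossing. Minimality makes `p ↦ p + 1` inject
the immediate repeats into the other positions, so the sequence has at most twice as many positions
as there are last occurrences and gap positions, that is at most `2 (ℓ + ℓ)`.
-/

/-- A sequence with values in `Fin ℓ` is non-crossing if for all `i < j < k < l`,
`x i ≠ x k`, or `x j ≠ x l`, or all four values are equal. -/
def NonCrossing {n ℓ : ℕ} (x : Fin n → Fin ℓ) : Prop :=
  ∀ i j k l : Fin n, i < j → j < k → k < l →
    x i ≠ x k ∨ x j ≠ x l ∨ (x i = x j ∧ x j = x k ∧ x k = x l)

/-- A sequence is minimal if no three consecutive entries are equal. -/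
def MinimalSeq {n ℓ : ℕ} (x : Fin n → Fin ℓ) : Prop :=
  ∀ i j k : Fin n, (j : ℕ) = (i : ℕ) + 1 → (k : ℕ) = (i : ℕ) + 2 →
    ¬(x i = x j ∧ x j = x k)

open Finset Order

section

variable {ι α : Type*} [LinearOrder ι] [Fintype ι] [DecidableEq α] (x : ι → α)

def lastOccurrences : Finset ι := {p | ∀ q, p < q → x q ≠ x p}

def gapStarts [SuccOrder ι] : Finset ι := {p | x (succ p) ≠ x p ∧ ∃ q, p < q ∧ x q = x p}

/-- The guard `p < succ p` excludes the last position, which is its own `succ`. -/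
def immediateRepeats [SuccOrder ι] : Finset ι := {p | p < succ p ∧ x (succ p) = x p}

lemma card_lastOccurrences_le [Fintype α] : #(lastOccurrences x) ≤ Fintype.card α := by
  refine card_le_card_of_injOn x (fun _ _ ↦ mem_univ _) fun p hp p' hp' hxp ↦ ?_
  simp only [lastOccurrences, coe_filter, mem_univ, true_and, Set.mem_ofPred_eq] at hp hp'
  by_contra hne
  rcases lt_or_gt_of_ne hne with hlt | hlt
  · exact hp p' hlt hxp.symm
  · exact hp' p hlt hxp

variable [SuccOrder ι]

lemma lt_succ_of_mem_gapStarts {p : ι} (hp : p ∈ gapStarts x) : p < succ p :=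
  (le_succ p).lt_of_ne fun h ↦ (mem_filter.1 hp).2.1 (congrArg x h).symm

/-- Otherwise `succ p < p' < succ p' < q'`, with `q'` a later occurrence of `x p'`, is a crossing. -/
lemma succ_ne_of_mem_gapStarts
    (hnc : ∀ i j k l, i < j → j < k → k < l →
      x i ≠ x k ∨ x j ≠ x l ∨ (x i = x j ∧ x j = x k ∧ x k = x l))
    {p p' : ι} (hp' : p' ∈ gapStarts x) (hlt : p < p') :
    x (succ p) ≠ x (succ p') := by
  intro hxs
  obtain ⟨hnext', q', hpq', hxq'⟩ := (mem_filter.1 hp').2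
  have hsucc_lt : succ p < p' :=
    (succ_le_of_lt hlt).lt_of_ne fun h ↦ hnext' (h ▸ hxs).symm
  have hsucc'_lt : succ p' < q' :=
    (succ_le_of_lt hpq').lt_of_ne fun h ↦ hnext' (h ▸ hxq')
  rcases hnc _ _ _ _ hsucc_lt (lt_succ_of_mem_gapStarts x hp') hsucc'_lt with h | h | h
  · exact h hxs
  · exact h hxq'.symm
  · exact hnext' (hxs ▸ h.1)

lemma card_gapStarts_le [Fintype α]
    (hnc : ∀ i j k l, i < j → j < k → k < l →
      x i ≠ x k ∨ x j ≠ x l ∨ (x i = x j ∧ x j = x k ∧ x k = x l)) :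
    #(gapStarts x) ≤ Fintype.card α := by
  refine card_le_card_of_injOn (x ∘ succ) (fun _ _ ↦ mem_univ _) fun p hp p' hp' hxs ↦ ?_
  by_contra hne
  rcases lt_or_gt_of_ne hne with hlt | hlt
  · exact succ_ne_of_mem_gapStarts x hnc hp' hlt hxs
  · exact succ_ne_of_mem_gapStarts x hnc hp hlt hxs.symm

lemma card_immediateRepeats_le (hmin : ∀ p q r : ι, p ⋖ q → q ⋖ r → ¬(x p = x q ∧ x q = x r)) :
    #(immediateRepeats x) ≤ #(immediateRepeats x)ᶜ := by
  refine card_le_card_of_injOn succ (fun p hp ↦ ?_) fun p hp p' hp' h ↦ ?_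
  · simp only [immediateRepeats, coe_filter, mem_univ, true_and, Set.mem_ofPred_eq,
      coe_compl, Set.mem_compl_iff] at hp ⊢
    rintro ⟨hlt, hx⟩
    exact hmin _ _ _ (covBy_succ_of_not_isMax (lt_succ_iff_not_isMax.1 hp.1))
      (covBy_succ_of_not_isMax (lt_succ_iff_not_isMax.1 hlt)) ⟨hp.2.symm, hx.symm⟩
  · simp only [immediateRepeats, coe_filter, mem_univ, true_and, Set.mem_ofPred_eq] at hp hp'
    exact (succ_eq_succ_iff_of_not_isMax (lt_succ_iff_not_isMax.1 hp.1)
      (lt_succ_iff_not_isMax.1 hp'.1)).1 h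

lemma compl_immediateRepeats_subset :
    (immediateRepeats x)ᶜ ⊆ lastOccurrences x ∪ gapStarts x := by
  intro p hp
  simp only [immediateRepeats, lastOccurrences, gapStarts, mem_compl, mem_union, mem_filter,
    mem_univ, true_and, not_and] at hp ⊢
  by_cases hlast : ∀ q, p < q → x q ≠ x p
  · exact .inl hlast
  · push Not at hlast
    obtain ⟨q, hpq, hxq⟩ := hlast
    exact .inr ⟨hp (lt_succ_of_not_isMax hpq.not_isMax), q, hpq, hxq⟩

theorem card_le_four_mul_card [Fintype α]
    (hnc : ∀ i j k l, i < j → j < k → k < l →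
      x i ≠ x k ∨ x j ≠ x l ∨ (x i = x j ∧ x j = x k ∧ x k = x l))
    (hmin : ∀ p q r : ι, p ⋖ q → q ⋖ r → ¬(x p = x q ∧ x q = x r)) :
    Fintype.card ι ≤ 4 * Fintype.card α := by
  have hsplit := card_add_card_compl (immediateRepeats x)
  have hrep := card_immediateRepeats_le x hmin
  have hrest := (card_le_card (compl_immediateRepeats_subset x)).trans
    (card_union_le (lastOccurrences x) (gapStarts x))
  have hlast := card_lastOccurrences_le x
  have hgap := card_gapStarts_le x hnc
  omega

end

theorem minimal_noncrossing_length_le {n ℓ : ℕ} (x : Fin n → Fin ℓ)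
    (hnc : NonCrossing x) (hmin : MinimalSeq x) : n ≤ 4 * ℓ := by
  have hmin' : ∀ p q r : Fin n, p ⋖ q → q ⋖ r → ¬(x p = x q ∧ x q = x r) := by
    intro p q r hpq hqr
    simp only [Fin.covBy_iff, Nat.covBy_iff_add_one_eq] at hpq hqr
    exact hmin p q r hpq.symm (by omega)
  simpa using card_le_four_mul_card x hnc hmin'
end

section
/- Let V be a finite vertex set, let S₁, S₂ be two edge sets on V, and let X ⊆ V be such that every vertex incident both to an edge of S₁ and to an edge of S₂ belongs to X. For i ∈ {1,2} let πᵢ be the partition of X where two vertices of X are in the same block iff they are connected in (V, Sᵢ). Then two vertices of X are connected in (V, S₁ ∪ S₂) if and only if they are in the same block of the join π₁ ⊔ π₂ in the partition lattice of X. -/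
/-!
Follow a walk of `⨆ i, G i` from `u` and keep track of a vertex `y ∈ X` that is already known
to be in the block of `u` and from which the current vertex is reachable inside a single `G i`.
When the walk switches from `G i` to `G j` at a vertex `a ≠ y`, the vertex `a` has a neighbour
in both graphs, hence lies in `X`, and `a` becomes the new `y`.
-/

/-- The partition (setoid) on `X` where two vertices are in the same block iff they
are connected in the spanning subgraph `(V, S)`. -/
def reachSetoid {V : Type*} (S : Set (Sym2 V)) (X : Set V) : Setoid X where
  r a b := (SimpleGraph.fromEdgeSet S).Reachable a b
  iseqv := ⟨fun _ => SimpleGraph.Reachable.refl _,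
    fun h => h.symm, fun h h' => h.trans h'⟩

namespace SimpleGraph

variable {V ι : Type*}

theorem Reachable.exists_adj_of_ne {G : SimpleGraph V} {u v : V} (h : G.Reachable u v)
    (hne : u ≠ v) : ∃ w, G.Adj v w :=
  h.elim fun p => ⟨_, (p.adj_penultimate (p.not_nil_of_ne hne)).symm⟩

def joinReachableSetoid (G : ι → SimpleGraph V) (X : Set V) : Setoid X :=
  ⨆ i, (G i).reachableSetoid.comap Subtype.val

variable {G : ι → SimpleGraph V} {X : Set V}

theorem joinReachableSetoid_of_reachable {x y : X} {i : ι} (h : (G i).Reachable x y) :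
    joinReachableSetoid G X x y :=
  le_iSup (fun i => (G i).reachableSetoid.comap Subtype.val) i h

theorem reachable_iSup_of_joinReachableSetoid {x y : X} (h : joinReachableSetoid G X x y) :
    (⨆ i, G i).Reachable x y := by
  have hle : joinReachableSetoid G X ≤ (⨆ i, G i).reachableSetoid.comap Subtype.val :=
    iSup_le fun i _ _ hr => hr.mono (le_iSup G i)
  exact hle h

variable (hX : ∀ v i j, i ≠ j → (∃ w, (G i).Adj v w) → (∃ w, (G j).Adj v w) → v ∈ X)
include hX

theorem exists_reachable_of_adj {u : X} {a c : V}
    (ha : ∃ y : X, joinReachableSetoid G X u y ∧ ∃ i, (G i).Reachable y a)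
    (hac : ∃ j, (G j).Adj a c) :
    ∃ y : X, joinReachableSetoid G X u y ∧ ∃ i, (G i).Reachable y c := by
  obtain ⟨y, huy, i, hya⟩ := ha
  obtain ⟨j, hj⟩ := hac
  by_cases hij : i = j
  · subst hij
    exact ⟨y, huy, i, hya.trans hj.reachable⟩
  by_cases hy : (y : V) = a
  · exact ⟨y, huy, j, hy ▸ hj.reachable⟩
  have haX : a ∈ X := hX a i j hij (hya.exists_adj_of_ne hy) ⟨c, hj⟩
  exact ⟨⟨a, haX⟩, (joinReachableSetoid G X).trans huy (joinReachableSetoid_of_reachable hya),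
    j, hj.reachable⟩

theorem exists_reachable_of_reachable_iSup [Nonempty ι] {u : X} {a : V}
    (h : (⨆ i, G i).Reachable u a) :
    ∃ y : X, joinReachableSetoid G X u y ∧ ∃ i, (G i).Reachable y a := by
  rw [reachable_iff_reflTransGen] at h
  induction h with
  | refl => exact ⟨u, (joinReachableSetoid G X).refl u, Classical.arbitrary ι, .refl _⟩
  | tail _ hac ih => exact exists_reachable_of_adj hX ih (iSup_adj.mp hac)

theorem joinReachableSetoid_of_reachable_iSup [Nonempty ι] {u v : X}
    (h : (⨆ i, G i).Reachable u v) : joinReachableSetoid G X u v :=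
  have ⟨_, huy, _, hyv⟩ := exists_reachable_of_reachable_iSup hX h
  (joinReachableSetoid G X).trans huy (joinReachableSetoid_of_reachable hyv)

theorem reachable_iSup_iff_joinReachableSetoid [Nonempty ι] {u v : X} :
    (⨆ i, G i).Reachable u v ↔ joinReachableSetoid G X u v :=
  ⟨joinReachableSetoid_of_reachable_iSup hX, reachable_iSup_of_joinReachableSetoid⟩

end SimpleGraph

theorem reachable_union_iff_join_general {V : Type*}
    (S₁ S₂ : Set (Sym2 V)) (X : Set V)
    (hX : ∀ v : V, (∃ e ∈ S₁, v ∈ e) → (∃ e ∈ S₂, v ∈ e) → v ∈ X) :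
    ∀ u v : X, (SimpleGraph.fromEdgeSet (S₁ ∪ S₂)).Reachable u v ↔
      (reachSetoid S₁ X ⊔ reachSetoid S₂ X).r u v := by
  intro u v
  let G : Bool → SimpleGraph V := fun b => .fromEdgeSet (cond b S₁ S₂)
  have hG : SimpleGraph.fromEdgeSet (S₁ ∪ S₂) = ⨆ b, G b := by
    rw [SimpleGraph.fromEdgeSet_union, iSup_bool_eq]
    rfl
  have hJ : reachSetoid S₁ X ⊔ reachSetoid S₂ X = SimpleGraph.joinReachableSetoid G X := by
    rw [SimpleGraph.joinReachableSetoid, iSup_bool_eq]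
    rfl
  have incident {S : Set (Sym2 V)} {x : V} :
      (∃ w, (SimpleGraph.fromEdgeSet S).Adj x w) → ∃ e ∈ S, x ∈ e :=
    fun ⟨w, hw⟩ => ⟨s(x, w), hw.1, Sym2.mem_mk_left x w⟩
  have hXG : ∀ x i j, i ≠ j → (∃ w, (G i).Adj x w) → (∃ w, (G j).Adj x w) → x ∈ X := by
    rintro x (_ | _) (_ | _) hij hi hj
    · exact absurd rfl hij
    · exact hX x (incident hj) (incident hi)
    · exact hX x (incident hi) (incident hj)
    · exact absurd rfl hij
  rw [hG, hJ]
  exact SimpleGraph.reachable_iSup_iff_joinReachableSetoid hXG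

/-- If every vertex incident to both an edge of `S₁` and an edge of `S₂` lies in `X`,
then two vertices of `X` are connected in `(V, S₁ ∪ S₂)` iff they are in the same
block of the join of the connectivity partitions of `S₁` and `S₂` on `X`. -/
theorem reachable_union_iff_join {V : Type*} [Fintype V]
    (S₁ S₂ : Set (Sym2 V)) (X : Set V)
    (hX : ∀ v : V, (∃ e ∈ S₁, v ∈ e) → (∃ e ∈ S₂, v ∈ e) → v ∈ X) :
    ∀ u v : X, (SimpleGraph.fromEdgeSet (S₁ ∪ S₂)).Reachable u v ↔
      (reachSetoid S₁ X ⊔ reachSetoid S₂ X).r u v :=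
  reachable_union_iff_join_general S₁ S₂ X hX
end

section
/- Let V be a finite vertex set and S₁, S₂ edge sets on V with all common incidences contained in X ⊆ V (every vertex incident to edges of both S₁ and S₂ lies in X). Suppose for i ∈ {1,2} that every vertex of a set Tᵢ ⊆ V is connected in (V,Sᵢ) to some vertex of Bᵢ ∪ X, where Bᵢ ⊆ V. Let π' be the join of the connectivity partitions of S₁ on B₁ ∪ X and of S₂ on B₂ ∪ X, and suppose every x ∈ X is in the same block of π' as some vertex of B := B₁ ∪ B₂. Then every vertex of T₁ ∪ T₂ ∪ X is connected in (V, S₁ ∪ S₂) to some vertex of B. -/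
/-!
Every block of the join is generated by pairs connected in `(V, S₁)` or in `(V, S₂)`, and both
graphs are subgraphs of `(V, S₁ ∪ S₂)`; since reachability is an equivalence relation, each block
is therefore connected in `(V, S₁ ∪ S₂)`. A terminal of `Tᵢ` first reaches `Bᵢ ∪ X` inside
`(V, Sᵢ)`, and from a vertex of `X` it continues to `B` through its block.
-/

namespace SimpleGraph

variable {V : Type*}

theorem reachable_of_eqvGen {G : SimpleGraph V} {r : V → V → Prop} (hr : r ≤ G.Reachable)
    {a c : V} (h : Relation.EqvGen r a c) : G.Reachable a c :=
  G.reachable_is_equivalence.eqvGen_iff.mp (Relation.EqvGen.mono hr a c h)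

theorem exists_reachable_of_exists_reachable_union {G H : SimpleGraph V} (hGH : G ≤ H)
    {B B' X : Set V} (hBB' : B ⊆ B') (hX : ∀ x ∈ X, ∃ b ∈ B', H.Reachable x b) {t : V}
    (ht : ∃ b ∈ B ∪ X, G.Reachable t b) : ∃ b ∈ B', H.Reachable t b := by
  obtain ⟨b, hb | hb, htb⟩ := ht
  · exact ⟨b, hBB' hb, htb.mono hGH⟩
  · obtain ⟨b', hb', hbb'⟩ := hX b hb
    exact ⟨b', hb', (htb.mono hGH).trans hbb'⟩

end SimpleGraph

open SimpleGraph in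
theorem terminals_connected_to_boundary_general {V : Type*}
    (S₁ S₂ : Set (Sym2 V)) (X B₁ B₂ T₁ T₂ : Set V)
    (hT₁ : ∀ t ∈ T₁, ∃ b ∈ B₁ ∪ X, (SimpleGraph.fromEdgeSet S₁).Reachable t b)
    (hT₂ : ∀ t ∈ T₂, ∃ b ∈ B₂ ∪ X, (SimpleGraph.fromEdgeSet S₂).Reachable t b)
    (hXB : ∀ x ∈ X, ∃ b ∈ B₁ ∪ B₂,
      Relation.EqvGen (fun a c : V =>
        (a ∈ B₁ ∪ X ∧ c ∈ B₁ ∪ X ∧ (SimpleGraph.fromEdgeSet S₁).Reachable a c) ∨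
        (a ∈ B₂ ∪ X ∧ c ∈ B₂ ∪ X ∧ (SimpleGraph.fromEdgeSet S₂).Reachable a c)) x b) :
    ∀ t ∈ T₁ ∪ T₂ ∪ X, ∃ b ∈ B₁ ∪ B₂,
      (SimpleGraph.fromEdgeSet (S₁ ∪ S₂)).Reachable t b := by
  have hle₁ : fromEdgeSet S₁ ≤ fromEdgeSet (S₁ ∪ S₂) := fromEdgeSet_mono Set.subset_union_left
  have hle₂ : fromEdgeSet S₂ ≤ fromEdgeSet (S₁ ∪ S₂) := fromEdgeSet_mono Set.subset_union_right
  have hX : ∀ x ∈ X, ∃ b ∈ B₁ ∪ B₂, (fromEdgeSet (S₁ ∪ S₂)).Reachable x b := by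
    intro x hx
    obtain ⟨b, hb, hxb⟩ := hXB x hx
    refine ⟨b, hb, reachable_of_eqvGen ?_ hxb⟩
    rintro a c (⟨-, -, hac⟩ | ⟨-, -, hac⟩)
    exacts [hac.mono hle₁, hac.mono hle₂]
  rintro t ((ht | ht) | ht)
  · exact exists_reachable_of_exists_reachable_union hle₁ Set.subset_union_left hX (hT₁ t ht)
  · exact exists_reachable_of_exists_reachable_union hle₂ Set.subset_union_right hX (hT₂ t ht)
  · exact hX t ht

/-- If all common incidences of `S₁` and `S₂` are in `X`, every terminal of `Tᵢ` is
connected in `(V, Sᵢ)` to `Bᵢ ∪ X`, and every vertex of `X` is in the same block as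
some vertex of `B = B₁ ∪ B₂` in the join of the connectivity partitions of `S₁` on
`B₁ ∪ X` and `S₂` on `B₂ ∪ X`, then every vertex of `T₁ ∪ T₂ ∪ X` is connected in
`(V, S₁ ∪ S₂)` to some vertex of `B`. -/
theorem terminals_connected_to_boundary {V : Type*} [Fintype V]
    (S₁ S₂ : Set (Sym2 V)) (X B₁ B₂ T₁ T₂ : Set V)
    (hX : ∀ v : V, (∃ e ∈ S₁, v ∈ e) → (∃ e ∈ S₂, v ∈ e) → v ∈ X)
    (hT₁ : ∀ t ∈ T₁, ∃ b ∈ B₁ ∪ X, (SimpleGraph.fromEdgeSet S₁).Reachable t b)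
    (hT₂ : ∀ t ∈ T₂, ∃ b ∈ B₂ ∪ X, (SimpleGraph.fromEdgeSet S₂).Reachable t b)
    (hXB : ∀ x ∈ X, ∃ b ∈ B₁ ∪ B₂,
      Relation.EqvGen (fun a c : V =>
        (a ∈ B₁ ∪ X ∧ c ∈ B₁ ∪ X ∧ (SimpleGraph.fromEdgeSet S₁).Reachable a c) ∨
        (a ∈ B₂ ∪ X ∧ c ∈ B₂ ∪ X ∧ (SimpleGraph.fromEdgeSet S₂).Reachable a c)) x b) :
    ∀ t ∈ T₁ ∪ T₂ ∪ X, ∃ b ∈ B₁ ∪ B₂,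
      (SimpleGraph.fromEdgeSet (S₁ ∪ S₂)).Reachable t b :=
  terminals_connected_to_boundary_general S₁ S₂ X B₁ B₂ T₁ T₂ hT₁ hT₂ hXB
end

section
/- Suppose a function T : ℕ × ℕ → ℝ≥1 satisfies: T(n,p) ≤ n^c for all p ≤ c₀, and T(n,p) ≤ n^(c·√p) · 2^(c·p) · T(n, ⌈(3/4)·p⌉) for all p > c₀, where c ≥ 1 and c₀ ≥ 4 are constants and n ≥ 2. Then there exist constants c₁, c₂ (depending only on c and c₀) such that T(n,p) ≤ 2^(c₁·p) · n^(c₂·√p) for all n ≥ 2 and p ≥ 1. -/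
/-!
For `p > c₀ ≥ 4` the recursion replaces `p` by `⌈3p/4⌉ ≤ 7p/8`, hence `√p` by at most
`√(7/8) · √p`. Unrolling, the exponents of `2` and of `n` are dominated by geometric series,
which gives `T(n,p) ≤ 2^(8cp) · n^(c√p / (1 - √(7/8)))` by strong induction on `p`.
-/

lemma mul_add_div_one_sub_mul_le {a ρ s t : ℝ} (ha : 0 ≤ a) (hρ : ρ < 1) (h : t ≤ ρ * s) :
    a * s + a / (1 - ρ) * t ≤ a / (1 - ρ) * s := by
  have hρ' : 1 - ρ ≠ 0 := by linarith
  calc a * s + a / (1 - ρ) * t ≤ a * s + a / (1 - ρ) * (ρ * s) := by gcongr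
    _ = a / (1 - ρ) * s := by field_simp; ring

lemma le_rpow_mul_rpow_sqrt_of_recurrence {T : ℕ → ℝ} {f : ℕ → ℕ} {x y a b ρ : ℝ} {p₀ : ℕ}
    (hx : 1 ≤ x) (hy : 1 ≤ y) (ha : 0 ≤ a) (hb : 0 ≤ b) (hρ : ρ < 1)
    (hf_pos : ∀ p, p₀ < p → 1 ≤ f p) (hf_le : ∀ p, p₀ < p → (f p : ℝ) ≤ ρ * p)
    (hbase : ∀ p, 1 ≤ p → p ≤ p₀ → T p ≤ y ^ b)
    (hrec : ∀ p, p₀ < p → T p ≤ y ^ (b * √p) * x ^ (a * p) * T (f p)) (p : ℕ) (hp : 1 ≤ p) :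
    T p ≤ x ^ (a / (1 - ρ) * p) * y ^ (b / (1 - √ρ) * √p) := by
  induction p using Nat.strong_induction_on with
  | _ p ih =>
  have hsqrtρ : √ρ < 1 := (Real.sqrt_lt' one_pos).2 (by linarith)
  have hsqrtp : 1 ≤ √(p : ℝ) := Real.one_le_sqrt.2 (by exact_mod_cast hp)
  by_cases hpp : p ≤ p₀
  · have hb_le : b ≤ b / (1 - √ρ) * √p := by
      calc b ≤ b / (1 - √ρ) := le_div_self hb (by linarith) (by linarith [Real.sqrt_nonneg ρ])
        _ ≤ b / (1 - √ρ) * √p := le_mul_of_one_le_right (div_nonneg hb (by linarith)) hsqrtp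
    calc T p ≤ y ^ b := hbase p hp hpp
      _ ≤ 1 * y ^ (b / (1 - √ρ) * √p) := by
          rw [one_mul]
          exact Real.rpow_le_rpow_of_exponent_le hy hb_le
      _ ≤ x ^ (a / (1 - ρ) * p) * y ^ (b / (1 - √ρ) * √p) := by
          gcongr
          exact Real.one_le_rpow hx (mul_nonneg (div_nonneg ha (by linarith)) (Nat.cast_nonneg p))
  · push Not at hpp
    have hq : (f p : ℝ) ≤ ρ * p := hf_le p hpp
    have hqp : f p < p := by
      have : ρ * p < p := by nlinarith [(by exact_mod_cast hp : (1 : ℝ) ≤ p)]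
      exact_mod_cast hq.trans_lt this
    have hsqrtq : √(f p : ℝ) ≤ √ρ * √p := by
      rw [← Real.sqrt_mul' _ (Nat.cast_nonneg p)]
      exact Real.sqrt_le_sqrt hq
    calc T p ≤ y ^ (b * √p) * x ^ (a * p) * T (f p) := hrec p hpp
      _ ≤ y ^ (b * √p) * x ^ (a * p) *
            (x ^ (a / (1 - ρ) * f p) * y ^ (b / (1 - √ρ) * √(f p))) := by
          gcongr
          exact ih (f p) hqp (hf_pos p hpp)
      _ = x ^ (a * p + a / (1 - ρ) * f p) * y ^ (b * √p + b / (1 - √ρ) * √(f p)) := by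
          rw [Real.rpow_add (by linarith), Real.rpow_add (by linarith)]
          ring
      _ ≤ x ^ (a / (1 - ρ) * p) * y ^ (b / (1 - √ρ) * √p) := by
          gcongr
          · exact mul_add_div_one_sub_mul_le ha hρ hq
          · exact mul_add_div_one_sub_mul_le hb hsqrtρ hsqrtq

lemma ceil_three_fourths_mul_le {p : ℕ} (hp : 5 ≤ p) :
    (⌈(3 / 4 : ℝ) * p⌉₊ : ℝ) ≤ 7 / 8 * p := by
  have hceil : 4 * ⌈(3 / 4 : ℝ) * p⌉₊ < 3 * p + 4 := by
    have := Nat.ceil_lt_add_one (by positivity : (0 : ℝ) ≤ 3 / 4 * p)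
    exact_mod_cast (by linarith : (4 * ⌈(3 / 4 : ℝ) * p⌉₊ : ℝ) < 3 * p + 4)
  have h : ((8 * ⌈(3 / 4 : ℝ) * p⌉₊ : ℕ) : ℝ) ≤ (7 * p : ℕ) := by
    exact_mod_cast (by omega : 8 * ⌈(3 / 4 : ℝ) * p⌉₊ ≤ 7 * p)
  push_cast at h
  linarith

theorem recurrence_solution_general (T : ℕ → ℕ → ℝ) (c : ℝ) (c₀ : ℕ)
    (hc : 1 ≤ c) (hc₀ : 4 ≤ c₀)
    (hbase : ∀ n p : ℕ, 2 ≤ n → p ≤ c₀ → T n p ≤ (n : ℝ) ^ c)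
    (hrec : ∀ n p : ℕ, 2 ≤ n → c₀ < p →
      T n p ≤ (n : ℝ) ^ (c * Real.sqrt p) * 2 ^ (c * p) *
        T n ⌈(3 / 4 : ℝ) * p⌉₊) :
    ∃ c₁ c₂ : ℝ, ∀ n p : ℕ, 2 ≤ n → 1 ≤ p →
      T n p ≤ 2 ^ (c₁ * p) * (n : ℝ) ^ (c₂ * Real.sqrt p) := by
  refine ⟨c / (1 - 7 / 8), c / (1 - √(7 / 8)), fun n p hn hp => ?_⟩
  have hc' : 0 ≤ c := zero_le_one.trans hc
  exact le_rpow_mul_rpow_sqrt_of_recurrence (T := T n) (f := fun p => ⌈(3 / 4 : ℝ) * p⌉₊)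
    one_le_two (by exact_mod_cast (by omega : 1 ≤ n)) hc' hc' (by norm_num)
    (fun p hp => Nat.one_le_ceil_iff.2 (mul_pos (by norm_num) (Nat.cast_pos.2 (by omega))))
    (fun p hp => ceil_three_fourths_mul_le (by omega))
    (fun p _ hp => hbase n p hn hp) (fun p hp => hrec n p hn hp) p hp

/-- A recurrence of the form `T(n,p) ≤ n^(c√p) · 2^(cp) · T(n, ⌈(3/4)p⌉)` with
polynomial base case solves to `T(n,p) ≤ 2^(c₁ p) · n^(c₂ √p)`. -/
theorem recurrence_solution (T : ℕ → ℕ → ℝ) (c : ℝ) (c₀ : ℕ)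
    (hc : 1 ≤ c) (hc₀ : 4 ≤ c₀)
    (hT1 : ∀ n p : ℕ, 1 ≤ T n p)
    (hbase : ∀ n p : ℕ, 2 ≤ n → p ≤ c₀ → T n p ≤ (n : ℝ) ^ c)
    (hrec : ∀ n p : ℕ, 2 ≤ n → c₀ < p →
      T n p ≤ (n : ℝ) ^ (c * Real.sqrt p) * 2 ^ (c * p) *
        T n ⌈(3 / 4 : ℝ) * p⌉₊) :
    ∃ c₁ c₂ : ℝ, ∀ n p : ℕ, 2 ≤ n → 1 ≤ p →
      T n p ≤ 2 ^ (c₁ * p) * (n : ℝ) ^ (c₂ * Real.sqrt p) :=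
  recurrence_solution_general T c c₀ hc hc₀ hbase hrec
end
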